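/- For every W ∈ D^{III}_n, the matrix Iₙ + W is invertible; setting Z = Φ(W) = i(Iₙ − W)(Iₙ + W)⁻¹, the matrix Z is symmetric (Zᵀ = Z) and Im Z := (Z − conj(Z))/(2i) is positive definite, so Z ∈ ℍₙ; moreover det(Im Z) = |det(Iₙ + W)|⁻² · det(Iₙ − conj(W)·W); and Φ is a bijection from D^{III}_n onto the Siegel upper half space ℍₙ. -/

import Mathlib

open Matrix
open scoped ComplexOrder

/-- Entrywise complex conjugation of a complex matrix. -/
def mconj {m k : Type*} (W : Matrix m k ℂ) : Matrix m k ℂ :=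
  W.map (starRingEnd ℂ)

/-- The bounded symmetric domain of type III (Siegel disk):
symmetric complex `n×n` matrices with `Iₙ − conj(W)·W` positive definite. -/
def SiegelDisk (n : ℕ) : Set (Matrix (Fin n) (Fin n) ℂ) :=
  {W | Wᵀ = W ∧ (1 - mconj W * W).PosDef}

/-- The matrix `A = −(Iₙ − W conj(W))⁻¹ (Iₙ + W conj(W))`. -/
noncomputable def matA {n : ℕ} (W : Matrix (Fin n) (Fin n) ℂ) : Matrix (Fin n) (Fin n) ℂ :=
  -((1 - W * mconj W)⁻¹ * (1 + W * mconj W))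

/-- The matrix `B = 2 (Iₙ − W conj(W))⁻¹ W`. -/
noncomputable def matB {n : ℕ} (W : Matrix (Fin n) (Fin n) ℂ) : Matrix (Fin n) (Fin n) ℂ :=
  (2 : ℂ) • ((1 - W * mconj W)⁻¹ * W)

/-- The "imaginary part" `Im Z = (Z − conj Z)/(2i)` of a complex square matrix. -/
noncomputable def imMat {n : ℕ} (Z : Matrix (Fin n) (Fin n) ℂ) : Matrix (Fin n) (Fin n) ℂ :=
  (2 * Complex.I)⁻¹ • (Z - mconj Z)

/-- The Siegel upper half space `ℍₙ`: symmetric complex `n×n` matrices with positive definite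
imaginary part. -/
noncomputable def SiegelUpperHalf (n : ℕ) : Set (Matrix (Fin n) (Fin n) ℂ) :=
  {Z | Zᵀ = Z ∧ (imMat Z).PosDef}

/-- The Cayley transform `Φ(W) = i (Iₙ − W)(Iₙ + W)⁻¹`. -/
noncomputable def cayley {n : ℕ} (W : Matrix (Fin n) (Fin n) ℂ) : Matrix (Fin n) (Fin n) ℂ :=
  Complex.I • ((1 - W) * (1 + W)⁻¹)

section CayleyAux

open Matrix Complex
open scoped ComplexOrder

noncomputable def invCayley {n : ℕ} (Z : Matrix (Fin n) (Fin n) ℂ) :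
    Matrix (Fin n) (Fin n) ℂ :=
  (Z + Complex.I • 1)⁻¹ * (Complex.I • 1 - Z)

variable {n : ℕ}

lemma mconj_eq (A : Matrix (Fin n) (Fin n) ℂ) : mconj A = Aᵀᴴ := by
  ext i j; rfl

@[simp] lemma mconj_one : mconj (1 : Matrix (Fin n) (Fin n) ℂ) = 1 := by
  simp [mconj_eq]

@[simp] lemma mconj_mul (A B : Matrix (Fin n) (Fin n) ℂ) :
    mconj (A * B) = mconj A * mconj B := by
  simp [mconj_eq, conjTranspose_mul, transpose_mul]

@[simp] lemma mconj_add (A B : Matrix (Fin n) (Fin n) ℂ) :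
    mconj (A + B) = mconj A + mconj B := by
  simp [mconj_eq]

@[simp] lemma mconj_sub (A B : Matrix (Fin n) (Fin n) ℂ) :
    mconj (A - B) = mconj A - mconj B := by
  simp [mconj_eq]

@[simp] lemma mconj_smul (c : ℂ) (A : Matrix (Fin n) (Fin n) ℂ) :
    mconj (c • A) = (starRingEnd ℂ c) • mconj A := by
  simp [mconj_eq, conjTranspose_smul, transpose_smul]

@[simp] lemma mconj_neg (A : Matrix (Fin n) (Fin n) ℂ) : mconj (-A) = -mconj A := by
  simp [mconj_eq]

@[simp] lemma mconj_inv (A : Matrix (Fin n) (Fin n) ℂ) : mconj A⁻¹ = (mconj A)⁻¹ := by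
  simp [mconj_eq, conjTranspose_nonsing_inv, transpose_nonsing_inv]

lemma det_mconj (A : Matrix (Fin n) (Fin n) ℂ) :
    (mconj A).det = starRingEnd ℂ A.det := by
  rw [mconj_eq, det_conjTranspose, det_transpose, starRingEnd_apply]

lemma conjTranspose_eq_mconj {W : Matrix (Fin n) (Fin n) ℂ} (hW : Wᵀ = W) :
    Wᴴ = mconj W := by
  rw [mconj_eq, hW]

lemma conj_eq_of {P P' X Y : Matrix (Fin n) (Fin n) ℂ} (hP : IsUnit P.det)
    (hP' : IsUnit P'.det) (h : P' * X * P = Y) : X = P'⁻¹ * Y * P⁻¹ := by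
  calc X = (P'⁻¹ * P') * X * (P * P⁻¹) := by
        rw [Matrix.nonsing_inv_mul _ hP', Matrix.mul_nonsing_inv _ hP, one_mul, mul_one]
  _ = P'⁻¹ * (P' * X * P) * P⁻¹ := by simp only [Matrix.mul_assoc]
  _ = P'⁻¹ * Y * P⁻¹ := by rw [h]

lemma inv_comm' {P A : Matrix (Fin n) (Fin n) ℂ} (hP : IsUnit P.det)
    (h : A * P = P * A) : A * P⁻¹ = P⁻¹ * A := by
  calc A * P⁻¹ = P⁻¹ * (P * A) * P⁻¹ := by
        rw [← Matrix.mul_assoc, Matrix.nonsing_inv_mul _ hP, one_mul]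
  _ = P⁻¹ * (A * (P * P⁻¹)) := by rw [← h]; simp only [Matrix.mul_assoc]
  _ = P⁻¹ * A := by rw [Matrix.mul_nonsing_inv _ hP, mul_one]

lemma isUnit_det_inv' {P : Matrix (Fin n) (Fin n) ℂ} (hPd : IsUnit P.det) :
    IsUnit P⁻¹.det := by
  rw [Matrix.det_nonsing_inv, Ring.inverse_eq_inv, isUnit_iff_ne_zero]
  exact inv_ne_zero (isUnit_iff_ne_zero.mp hPd)

lemma smul_mat_inv {c : ℂ} (hc : c ≠ 0) {A : Matrix (Fin n) (Fin n) ℂ}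
    (hA : IsUnit A.det) : (c • A)⁻¹ = c⁻¹ • A⁻¹ := by
  have : Invertible c := invertibleOfNonzero hc
  rw [Matrix.inv_smul (k := c) (h := hA), invOf_eq_inv]

lemma posDef_conj {A B : Matrix (Fin n) (Fin n) ℂ} (hA : A.PosDef) (hB : IsUnit B) :
    (Bᴴ * A * B).PosDef := by
  refine Matrix.PosDef.of_dotProduct_mulVec_pos (Matrix.isHermitian_conjTranspose_mul_mul B hA.1) fun x hx => ?_
  have hBx : B *ᵥ x ≠ 0 := by
    intro h
    exact hx (Matrix.mulVec_injective_iff_isUnit.mpr hB (by simpa using h))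
  simpa only [star_mulVec, dotProduct_mulVec, vecMul_vecMul] using hA.dotProduct_mulVec_pos hBx

lemma isUnit_one_add' {W : Matrix (Fin n) (Fin n) ℂ} (hW : Wᵀ = W)
    (hpd : (1 - mconj W * W).PosDef) : IsUnit (1 + W) := by
  rw [Matrix.isUnit_iff_isUnit_det, isUnit_iff_ne_zero]
  intro hdet
  obtain ⟨v, hv, hMv⟩ := Matrix.exists_mulVec_eq_zero_iff.mpr hdet
  have hWv : W *ᵥ v = -v := by
    have h1 : v + W *ᵥ v = 0 := by
      simpa [Matrix.add_mulVec, Matrix.one_mulVec] using hMv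
    linear_combination (norm := module) h1
  have h := hpd.dotProduct_mulVec_pos hv
  have hcalc : dotProduct (star v) ((1 - mconj W * W) *ᵥ v) = 0 := by
    rw [← conjTranspose_eq_mconj hW]
    rw [Matrix.sub_mulVec, Matrix.one_mulVec, dotProduct_sub]
    rw [← Matrix.mulVec_mulVec, hWv]
    have h2 : dotProduct (star v) (Wᴴ *ᵥ (-v)) = dotProduct (star (W *ᵥ v)) (-v) := by
      rw [dotProduct_mulVec, ← star_mulVec]
    rw [h2, hWv]
    simp
  rw [hcalc] at h
  exact lt_irrefl _ h

lemma cayley_symm' {W : Matrix (Fin n) (Fin n) ℂ} (hW : Wᵀ = W) (hP : IsUnit (1 + W)) :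
    (cayley W)ᵀ = cayley W := by
  have hPd : IsUnit (1 + W).det := (Matrix.isUnit_iff_isUnit_det _).mp hP
  rw [cayley, transpose_smul, transpose_mul, transpose_nonsing_inv, transpose_add,
    transpose_one, hW, transpose_sub, transpose_one, hW]
  congr 1
  exact (inv_comm' hPd (by noncomm_ring)).symm

lemma imMat_cayley {W : Matrix (Fin n) (Fin n) ℂ} (hW : Wᵀ = W) (hP : IsUnit (1 + W)) :
    imMat (cayley W) = ((1 + W)⁻¹)ᴴ * (1 - mconj W * W) * (1 + W)⁻¹ := by
  have hPd : IsUnit (1 + W).det := (Matrix.isUnit_iff_isUnit_det _).mp hP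
  have hP'd : IsUnit (1 + mconj W).det := by
    have h1 : (1 : Matrix (Fin n) (Fin n) ℂ) + mconj W = mconj (1 + W) := by simp
    rw [h1, det_mconj, isUnit_iff_ne_zero]
    simpa using isUnit_iff_ne_zero.mp hPd
  have hCT : ((1 + W)⁻¹)ᴴ = (1 + mconj W)⁻¹ := by
    rw [conjTranspose_nonsing_inv, conjTranspose_add, conjTranspose_one,
      conjTranspose_eq_mconj hW]
  rw [hCT]
  refine conj_eq_of hPd hP'd ?_
  have hmc : mconj (cayley W) = (-Complex.I) • ((1 - mconj W) * (1 + mconj W)⁻¹) := by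
    simp [cayley, Complex.conj_I]
  have hcomm' : (1 - mconj W) * (1 + mconj W)⁻¹ = (1 + mconj W)⁻¹ * (1 - mconj W) :=
    inv_comm' hP'd (by noncomm_ring)
  rw [imMat, hmc, cayley]
  rw [neg_smul, sub_neg_eq_add, ← smul_add, smul_smul]
  have hc : (2 * Complex.I)⁻¹ * Complex.I = 2⁻¹ := by
    field_simp
  rw [hc, Matrix.mul_smul, Matrix.smul_mul]
  rw [Matrix.mul_add (1 + mconj W) ((1 - W) * (1 + W)⁻¹) ((1 - mconj W) * (1 + mconj W)⁻¹),
    Matrix.add_mul ((1 + mconj W) * ((1 - W) * (1 + W)⁻¹))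
      ((1 + mconj W) * ((1 - mconj W) * (1 + mconj W)⁻¹)) (1 + W)]
  have h1 : (1 + mconj W) * ((1 - W) * (1 + W)⁻¹) * (1 + W) = (1 + mconj W) * (1 - W) := by
    simp only [Matrix.mul_assoc]
    rw [Matrix.nonsing_inv_mul _ hPd, mul_one]
  have h2 : (1 + mconj W) * ((1 - mconj W) * (1 + mconj W)⁻¹) * (1 + W)
      = (1 - mconj W) * (1 + W) := by
    rw [hcomm', ← Matrix.mul_assoc, Matrix.mul_nonsing_inv _ hP'd, one_mul]
  rw [h1, h2]
  have hexp : (1 + mconj W) * (1 - W) + (1 - mconj W) * (1 + W)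
      = (1 - mconj W * W) + (1 - mconj W * W) := by noncomm_ring
  rw [hexp, ← two_smul ℂ (1 - mconj W * W), smul_smul]
  norm_num

lemma four_mul_inv_two_I : (4:ℂ) * (2 * Complex.I)⁻¹ = -(2 * Complex.I) := by
  have h2I : (2*Complex.I) ≠ 0 := by simp [Complex.I_ne_zero]
  field_simp
  linear_combination (4:ℂ) * Complex.I_sq

section UHP
variable {Z : Matrix (Fin n) (Fin n) ℂ} (hZ : Zᵀ = Z) (hpd : (imMat Z).PosDef)

include hZ hpd in
lemma isUnit_S : IsUnit (Z + Complex.I • 1) := by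
  rw [Matrix.isUnit_iff_isUnit_det, isUnit_iff_ne_zero]
  intro hdet
  obtain ⟨v, hv, hMv⟩ := Matrix.exists_mulVec_eq_zero_iff.mpr hdet
  have hZv : Z *ᵥ v = -(Complex.I • v) := by
    have h1 : Z *ᵥ v + Complex.I • v = 0 := by
      simpa [Matrix.add_mulVec, Matrix.smul_mulVec, Matrix.one_mulVec] using hMv
    linear_combination (norm := module) h1
  have h := hpd.dotProduct_mulVec_pos hv
  have hs : (0:ℂ) < dotProduct (star v) v := dotProduct_star_self_pos_iff.mpr hv
  have hcalc : dotProduct (star v) ((imMat Z) *ᵥ v) = -(dotProduct (star v) v) := by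
    rw [imMat, ← conjTranspose_eq_mconj hZ]
    have h2 : dotProduct (star v) (Zᴴ *ᵥ v) = Complex.I * dotProduct (star v) v := by
      rw [dotProduct_mulVec, ← star_mulVec, hZv]
      simp [Complex.conj_I, smul_eq_mul]
    rw [Matrix.smul_mulVec, dotProduct_smul, Matrix.sub_mulVec, dotProduct_sub, hZv, h2]
    have h3 : dotProduct (star v) (-(Complex.I • v))
        = -(Complex.I * dotProduct (star v) v) := by
      simp [smul_eq_mul]
    rw [h3, smul_eq_mul]
    rw [show -(Complex.I * dotProduct (star v) v) - Complex.I * dotProduct (star v) v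
        = (2 * Complex.I) * (-(dotProduct (star v) v)) by ring]
    rw [← mul_assoc, inv_mul_cancel₀ (by simp [Complex.I_ne_zero] : (2 * Complex.I) ≠ 0),
      one_mul]
  rw [hcalc] at h
  exact lt_irrefl _ (h.trans (by simpa using neg_neg_iff_pos.mpr hs))

include hZ in
lemma S_symm : (Z + Complex.I • 1)ᵀ = Z + Complex.I • 1 := by
  rw [transpose_add, transpose_smul, transpose_one, hZ]

lemma ST_comm : (Complex.I • 1 - Z) * (Z + Complex.I • 1)
    = (Z + Complex.I • 1) * (Complex.I • 1 - Z) := by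
  simp only [Matrix.mul_add, Matrix.add_mul, Matrix.sub_mul, Matrix.mul_sub,
    Matrix.smul_mul, Matrix.mul_smul, one_mul, mul_one]
  module

lemma ZS_comm : Z * (Z + Complex.I • 1) = (Z + Complex.I • 1) * Z := by
  simp only [Matrix.mul_add, Matrix.add_mul, Matrix.smul_mul, Matrix.mul_smul,
    one_mul, mul_one]

include hZ hpd in
lemma invCayley_symm : (invCayley Z)ᵀ = invCayley Z := by
  have hSd : IsUnit (Z + Complex.I • 1).det :=
    (Matrix.isUnit_iff_isUnit_det _).mp (isUnit_S hZ hpd)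
  rw [invCayley, transpose_mul, transpose_nonsing_inv, S_symm hZ, transpose_sub,
    transpose_smul, transpose_one, hZ]
  exact inv_comm' hSd ST_comm

include hZ hpd in
lemma one_add_invCayley :
    1 + invCayley Z = (2 * Complex.I) • (Z + Complex.I • 1)⁻¹ := by
  have hSd : IsUnit (Z + Complex.I • 1).det :=
    (Matrix.isUnit_iff_isUnit_det _).mp (isUnit_S hZ hpd)
  have h1 : (1 : Matrix (Fin n) (Fin n) ℂ) + invCayley Z
      = (Z + Complex.I • 1)⁻¹ * ((Z + Complex.I • 1) + (Complex.I • 1 - Z)) := by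
    rw [Matrix.mul_add, Matrix.nonsing_inv_mul _ hSd, invCayley]
  rw [h1, show (Z + Complex.I • 1) + (Complex.I • 1 - Z)
      = (2 * Complex.I) • (1 : Matrix (Fin n) (Fin n) ℂ) by module,
    Matrix.mul_smul, mul_one]

include hZ hpd in
lemma one_sub_invCayley :
    1 - invCayley Z = (2:ℂ) • ((Z + Complex.I • 1)⁻¹ * Z) := by
  have hSd : IsUnit (Z + Complex.I • 1).det :=
    (Matrix.isUnit_iff_isUnit_det _).mp (isUnit_S hZ hpd)
  have h1 : (1 : Matrix (Fin n) (Fin n) ℂ) - invCayley Z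
      = (Z + Complex.I • 1)⁻¹ * ((Z + Complex.I • 1) - (Complex.I • 1 - Z)) := by
    rw [Matrix.mul_sub, Matrix.nonsing_inv_mul _ hSd, invCayley]
  rw [h1, show (Z + Complex.I • 1) - (Complex.I • 1 - Z) = (2:ℂ) • Z by module,
    Matrix.mul_smul]

include hZ hpd in
lemma cayley_invCayley : cayley (invCayley Z) = Z := by
  have hSd : IsUnit (Z + Complex.I • 1).det :=
    (Matrix.isUnit_iff_isUnit_det _).mp (isUnit_S hZ hpd)
  have h2I : (2 * Complex.I) ≠ 0 := by simp [Complex.I_ne_zero]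
  have hinv : (1 + invCayley Z)⁻¹ = (2 * Complex.I)⁻¹ • (Z + Complex.I • 1) := by
    rw [one_add_invCayley hZ hpd, smul_mat_inv h2I (isUnit_det_inv' hSd),
      Matrix.nonsing_inv_nonsing_inv _ hSd]
  rw [cayley, one_sub_invCayley hZ hpd, hinv]
  rw [Matrix.smul_mul, Matrix.mul_smul, smul_smul, smul_smul]
  rw [show Complex.I * 2 * (2 * Complex.I)⁻¹ = 1 by field_simp, one_smul,
    Matrix.mul_assoc, ZS_comm, ← Matrix.mul_assoc,
    Matrix.nonsing_inv_mul _ hSd, one_mul]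

include hZ hpd in
lemma one_sub_mconj_invCayley :
    1 - mconj (invCayley Z) * invCayley Z
      = ((2:ℂ) • (Z + Complex.I • 1)⁻¹)ᴴ * imMat Z * ((2:ℂ) • (Z + Complex.I • 1)⁻¹) := by
  have hSd : IsUnit (Z + Complex.I • 1).det :=
    (Matrix.isUnit_iff_isUnit_det _).mp (isUnit_S hZ hpd)
  have hS': mconj (Z + Complex.I • 1) = mconj Z - Complex.I • 1 := by
    simp [Complex.conj_I, sub_eq_add_neg]
  have hS'd : IsUnit (mconj Z - Complex.I • 1).det := by
    rw [← hS', det_mconj, isUnit_iff_ne_zero]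
    simpa using isUnit_iff_ne_zero.mp hSd
  have hW2 : invCayley Z = (Complex.I • 1 - Z) * (Z + Complex.I • 1)⁻¹ :=
    (inv_comm' hSd ST_comm).symm
  have hmW : mconj (invCayley Z)
      = (mconj Z - Complex.I • 1)⁻¹ * (-(Complex.I • 1) - mconj Z) := by
    rw [invCayley]
    simp [Complex.conj_I, hS', sub_eq_add_neg]
  -- rewrite product
  have hprod : mconj (invCayley Z) * invCayley Z
      = (mconj Z - Complex.I • 1)⁻¹
        * ((-(Complex.I • 1) - mconj Z) * (Complex.I • 1 - Z))
        * (Z + Complex.I • 1)⁻¹ := by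
    rw [hmW, hW2]
    simp only [Matrix.mul_assoc]
  have hone : (1 : Matrix (Fin n) (Fin n) ℂ)
      = (mconj Z - Complex.I • 1)⁻¹
        * ((mconj Z - Complex.I • 1) * (Z + Complex.I • 1))
        * (Z + Complex.I • 1)⁻¹ := by
    rw [← Matrix.mul_assoc, Matrix.nonsing_inv_mul _ hS'd, one_mul,
      Matrix.mul_nonsing_inv _ hSd]
  have hmid : (mconj Z - Complex.I • 1) * (Z + Complex.I • 1)
      - (-(Complex.I • 1) - mconj Z) * (Complex.I • 1 - Z)
      = (4:ℂ) • imMat Z := by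
    rw [imMat, smul_smul, four_mul_inv_two_I]
    simp only [Matrix.mul_add, Matrix.add_mul, Matrix.sub_mul, Matrix.mul_sub,
      Matrix.smul_mul, Matrix.mul_smul, one_mul, mul_one, smul_smul, Complex.I_mul_I,
      neg_one_smul, neg_mul, mul_neg, neg_smul, neg_neg]
    module
  calc 1 - mconj (invCayley Z) * invCayley Z
      = (mconj Z - Complex.I • 1)⁻¹
          * ((mconj Z - Complex.I • 1) * (Z + Complex.I • 1)
            - (-(Complex.I • 1) - mconj Z) * (Complex.I • 1 - Z))
          * (Z + Complex.I • 1)⁻¹ := by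
        rw [Matrix.mul_sub, Matrix.sub_mul, ← hprod, ← hone]
  _ = (mconj Z - Complex.I • 1)⁻¹ * ((4:ℂ) • imMat Z) * (Z + Complex.I • 1)⁻¹ := by
        rw [hmid]
  _ = ((2:ℂ) • (Z + Complex.I • 1)⁻¹)ᴴ * imMat Z * ((2:ℂ) • (Z + Complex.I • 1)⁻¹) := by
        rw [conjTranspose_smul, conjTranspose_nonsing_inv,
          conjTranspose_eq_mconj (S_symm hZ), hS']
        simp only [Matrix.smul_mul, Matrix.mul_smul, smul_smul]
        norm_num
  end UHP

lemma PW_comm {W : Matrix (Fin n) (Fin n) ℂ} : (1 + W) * W = W * (1 + W) := by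
  noncomm_ring

lemma invCayley_cayley {W : Matrix (Fin n) (Fin n) ℂ} (_hW : Wᵀ = W)
    (hP : IsUnit (1 + W)) : invCayley (cayley W) = W := by
  have hPd : IsUnit (1 + W).det := (Matrix.isUnit_iff_isUnit_det _).mp hP
  have h2I : (2 * Complex.I) ≠ 0 := by simp [Complex.I_ne_zero]
  have hS : cayley W + Complex.I • 1 = (2 * Complex.I) • (1 + W)⁻¹ := by
    rw [cayley, show (Complex.I • (1:Matrix (Fin n) (Fin n) ℂ))
        = Complex.I • ((1 + W) * (1 + W)⁻¹) by rw [Matrix.mul_nonsing_inv _ hPd],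
      ← smul_add, ← Matrix.add_mul]
    rw [show (1 - W) + (1 + W) = (2:ℂ) • (1:Matrix (Fin n) (Fin n) ℂ) by module,
      Matrix.smul_mul, one_mul, smul_smul]
    rw [mul_comm Complex.I 2]
  have hT : Complex.I • 1 - cayley W = (2 * Complex.I) • (W * (1 + W)⁻¹) := by
    rw [cayley, show (Complex.I • (1:Matrix (Fin n) (Fin n) ℂ))
        = Complex.I • ((1 + W) * (1 + W)⁻¹) by rw [Matrix.mul_nonsing_inv _ hPd],
      ← smul_sub, ← Matrix.sub_mul]
    rw [show (1 + W) - (1 - W) = (2:ℂ) • W by module, Matrix.smul_mul, smul_smul]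
    rw [mul_comm Complex.I 2]
  rw [invCayley, hS, hT, smul_mat_inv h2I (isUnit_det_inv' hPd),
    Matrix.nonsing_inv_nonsing_inv _ hPd]
  rw [Matrix.smul_mul, Matrix.mul_smul, smul_smul]
  rw [inv_mul_cancel₀ h2I, one_smul, ← Matrix.mul_assoc, PW_comm, Matrix.mul_assoc,
    Matrix.mul_nonsing_inv _ hPd, mul_one]

end CayleyAux

/-- For every `W` in the Siegel disk, `Iₙ + W` is invertible,
`Z = Φ(W) = i(Iₙ − W)(Iₙ + W)⁻¹` is symmetric with positive definite imaginary part (so lies in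
the Siegel upper half space), `det(Im Z) = |det(Iₙ + W)|⁻² · det(Iₙ − conj(W) W)`, and `Φ` is a
bijection from `D^{III}_n` onto `ℍₙ`. -/
theorem cayley_bijOn (n : ℕ) :
    (∀ W ∈ SiegelDisk n,
      IsUnit (1 + W) ∧
      (cayley W)ᵀ = cayley W ∧
      (imMat (cayley W)).PosDef ∧
      cayley W ∈ SiegelUpperHalf n ∧
      (imMat (cayley W)).det =
        (↑((‖(1 + W).det‖) ^ 2))⁻¹ * (1 - mconj W * W).det) ∧
    Set.BijOn cayley (SiegelDisk n) (SiegelUpperHalf n) := by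
  have main : ∀ W ∈ SiegelDisk n,
      IsUnit (1 + W) ∧ (cayley W)ᵀ = cayley W ∧ (imMat (cayley W)).PosDef ∧
      cayley W ∈ SiegelUpperHalf n ∧
      (imMat (cayley W)).det =
        (↑((‖(1 + W).det‖) ^ 2))⁻¹ * (1 - mconj W * W).det := by
    rintro W ⟨hW, hpd⟩
    have hP : IsUnit (1 + W) := isUnit_one_add' hW hpd
    have key := imMat_cayley hW hP
    have hpos : (imMat (cayley W)).PosDef := by
      rw [key]
      exact posDef_conj hpd (Matrix.isUnit_nonsing_inv_iff.mpr hP)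
    have hsym := cayley_symm' hW hP
    refine ⟨hP, hsym, hpos, ⟨hsym, hpos⟩, ?_⟩
    rw [key, det_mul, det_mul, det_conjTranspose, Matrix.det_nonsing_inv,
      Ring.inverse_eq_inv]
    have hsc : star (((1 + W).det)⁻¹) * ((1 + W).det)⁻¹
        = ((((‖(1 + W).det‖) ^ 2 : ℝ)) : ℂ)⁻¹ := by
      rw [Complex.star_def, map_inv₀, ← mul_inv]
      congr 1
      rw [mul_comm, Complex.mul_conj, ← Complex.sq_norm]
    calc star (((1 + W).det)⁻¹) * (1 - mconj W * W).det * ((1 + W).det)⁻¹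
        = (star (((1 + W).det)⁻¹) * ((1 + W).det)⁻¹) * (1 - mconj W * W).det := by ring
      _ = _ := by rw [hsc]
  refine ⟨main, ?_⟩
  have hmapsF : Set.MapsTo cayley (SiegelDisk n) (SiegelUpperHalf n) := by
    intro W hWmem
    exact (main W hWmem).2.2.2.1
  have hmapsG : Set.MapsTo invCayley (SiegelUpperHalf n) (SiegelDisk n) := by
    rintro Z ⟨hZ, hpd⟩
    have hSd : IsUnit (Z + Complex.I • 1).det :=
      (Matrix.isUnit_iff_isUnit_det _).mp (isUnit_S hZ hpd)
    refine ⟨invCayley_symm hZ hpd, ?_⟩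
    rw [one_sub_mconj_invCayley hZ hpd]
    refine posDef_conj hpd ?_
    rw [Matrix.isUnit_iff_isUnit_det, det_smul, isUnit_iff_ne_zero]
    refine mul_ne_zero (pow_ne_zero _ two_ne_zero) ?_
    rw [Matrix.det_nonsing_inv, Ring.inverse_eq_inv]
    exact inv_ne_zero (isUnit_iff_ne_zero.mp hSd)
  refine Set.InvOn.bijOn ⟨?_, ?_⟩ hmapsF hmapsG
  · rintro W ⟨hW, hpd⟩
    exact invCayley_cayley hW (isUnit_one_add' hW hpd)
  · rintro Z ⟨hZ, hpd⟩
    exact cayley_invCayley hZ hpd
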